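/- arXiv:1509.08875 — 4 statements merged into one kernel-verified Lean document; each statement's English description precedes it below -/
import Mathlib

section
/- For p ∈ (0,1/2], q = 1-p, and R(z) = z(z²-3z+(2+pq))/(pq), the preimage of the interval [0,2] under R restricted to ℝ equals [0,p] ∪ [q,1+p] ∪ [1+q,2]. -/
/-! Since `p + q = 1`, `p q R(z) = z (z - (1 + p)) (z - (1 + q))` and
`p q (R(z) - 2) = (z - p) (z - q) (z - 2)`. A monic cubic with ordered roots is `≥ 0` exactly
between its first two roots and beyond the third, so `R ≥ 0` on `[0, 1 + p] ∪ [1 + q, ∞)` and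
`R ≤ 2` on `(-∞, p] ∪ [q, 2]`; as `0 < p ≤ q < 1 + p ≤ 1 + q < 2`, these intersect in the
three intervals. -/

section CubicSign

variable {a b c z : ℝ}

theorem mul_sub_mul_sub_nonpos_iff (hab : a ≤ b) (hbc : b ≤ c) :
    (z - a) * (z - b) * (z - c) ≤ 0 ↔ z ≤ a ∨ b ≤ z ∧ z ≤ c := by
  constructor
  · intro h
    by_contra! hz
    obtain ⟨haz, hzc⟩ := hz
    rcases lt_or_ge z b with hzb | hbz
    · nlinarith [mul_pos (mul_pos (sub_pos.2 haz) (sub_pos.2 hzb)) (sub_pos.2 (hzb.trans_le hbc))]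
    · have hcz := hzc hbz
      nlinarith [mul_pos (mul_pos (sub_pos.2 haz) (sub_pos.2 (hbc.trans_lt hcz))) (sub_pos.2 hcz)]
  · rintro (hza | ⟨hbz, hzc⟩)
    · nlinarith [mul_nonneg (sub_nonneg.2 (hza.trans hab)) (sub_nonneg.2 (hza.trans (hab.trans hbc)))]
    · nlinarith [mul_nonneg (sub_nonneg.2 (hab.trans hbz)) (sub_nonneg.2 hbz)]

theorem mul_sub_mul_sub_nonneg_iff (hab : a ≤ b) (hbc : b ≤ c) :
    0 ≤ (z - a) * (z - b) * (z - c) ↔ a ≤ z ∧ z ≤ b ∨ c ≤ z := by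
  have hneg : (-z - -c) * (-z - -b) * (-z - -a) = -((z - a) * (z - b) * (z - c)) := by ring
  rw [← neg_nonpos, ← hneg, mul_sub_mul_sub_nonpos_iff (neg_le_neg hbc) (neg_le_neg hab)]
  simp only [neg_le_neg_iff]
  tauto

end CubicSign

theorem preimage_of_Icc (p q : ℝ) (hp : 0 < p) (hp2 : p ≤ 1 / 2) (hq : q = 1 - p)
    (R : ℝ → ℝ) (hR : ∀ z, R z = z * (z ^ 2 - 3 * z + (2 + p * q)) / (p * q)) :
    R ⁻¹' (Set.Icc 0 2) =
      Set.Icc 0 p ∪ Set.Icc q (1 + p) ∪ Set.Icc (1 + q) 2 := by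
  have hpq : 0 < p * q := mul_pos hp (by linarith)
  have hroots_zero (z : ℝ) : z * (z ^ 2 - 3 * z + (2 + p * q)) =
      (z - 0) * (z - (1 + p)) * (z - (1 + q)) := by subst hq; ring
  have hroots_two (z : ℝ) : z * (z ^ 2 - 3 * z + (2 + p * q)) - 2 * (p * q) =
      (z - p) * (z - q) * (z - 2) := by subst hq; ring
  ext z
  rw [Set.mem_preimage, Set.mem_Icc, hR, le_div_iff₀ hpq, div_le_iff₀ hpq, zero_mul,
    ← sub_nonpos (b := 2 * (p * q)), hroots_two, hroots_zero,
    mul_sub_mul_sub_nonneg_iff (by linarith) (by linarith),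
    mul_sub_mul_sub_nonpos_iff (by linarith) (by linarith)]
  simp only [Set.mem_union, Set.mem_Icc]
  constructor
  · rintro ⟨⟨h0z, hz1p⟩ | h1qz, hzp | ⟨hqz, hz2⟩⟩
    · exact Or.inl (Or.inl ⟨h0z, hzp⟩)
    · exact Or.inl (Or.inr ⟨hqz, hz1p⟩)
    · linarith
    · exact Or.inr ⟨h1qz, hz2⟩
  · rintro ((⟨h0z, hzp⟩ | ⟨hqz, hz1p⟩) | ⟨h1qz, hz2⟩)
    · exact ⟨Or.inl ⟨h0z, by linarith⟩, Or.inl hzp⟩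
    · exact ⟨Or.inl ⟨by linarith, hz1p⟩, Or.inr ⟨hqz, by linarith⟩⟩
    · exact ⟨Or.inr h1qz, Or.inr ⟨by linarith, hz2⟩⟩
end

section
/- For p ∈ (0,1/2] and q = 1-p, R maps the interval [0,p] bijectively and increasingly onto [0,2], where R(z) = z(z²-3z+(2+pq))/(pq). -/
/-!
Writing `R z = f z / (p q)` with `f z = z (z² - 3z + 2 + p q)`, one has `f 0 = 0` and
`f p = 2 p q` because `p² - 3p + 2 = (1 - p)(2 - p)`. For `a < b` the difference quotient of `f`
is `a² + ab + b² - 3(a + b) + 2 + pq`, which on `[0, p]` decreases in each variable and equals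
`(1 - 2p)(2 - p) ≥ 0` at `a = b = p`; so `f` is strictly increasing there, and the intermediate
value theorem gives surjectivity onto `[0, 2]`.
-/

open Set

theorem StrictMonoOn.bijOn_Icc {α δ : Type*} [ConditionallyCompleteLinearOrder α]
    [TopologicalSpace α] [OrderTopology α] [DenselyOrdered α] [LinearOrder δ]
    [TopologicalSpace δ] [OrderClosedTopology δ] {f : α → δ} {a b : α} (hab : a ≤ b)
    (hf : StrictMonoOn f (Icc a b)) (hc : ContinuousOn f (Icc a b)) :
    BijOn f (Icc a b) (Icc (f a) (f b)) :=
  ⟨hf.monotoneOn.mapsTo_Icc, hf.injOn, intermediate_value_Icc hab hc⟩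

theorem strictMonoOn_cubic {p : ℝ} (hp : p ≤ 1 / 2) :
    StrictMonoOn (fun z : ℝ => z * (z ^ 2 - 3 * z + (2 + p * (1 - p)))) (Icc 0 p) := by
  rintro a ⟨ha, -⟩ b ⟨-, hb⟩ hab
  have hquot : 0 < a ^ 2 + a * b + b ^ 2 - 3 * (a + b) + (2 + p * (1 - p)) := by
    have hsplit : a ^ 2 + a * b + b ^ 2 - 3 * (a + b) + (2 + p * (1 - p)) =
        (1 - 2 * p) * (2 - p) + (p - a) * (3 - a - b - p) + (p - b) * (3 - b - 2 * p) := by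
      ring
    rw [hsplit]
    have h₁ : 0 ≤ (1 - 2 * p) * (2 - p) := mul_nonneg (by linarith) (by linarith)
    have h₂ : 0 < (p - a) * (3 - a - b - p) := mul_pos (by linarith) (by linarith)
    have h₃ : 0 ≤ (p - b) * (3 - b - 2 * p) := mul_nonneg (by linarith) (by linarith)
    linarith
  have hdiff : b * (b ^ 2 - 3 * b + (2 + p * (1 - p))) - a * (a ^ 2 - 3 * a + (2 + p * (1 - p))) =
      (b - a) * (a ^ 2 + a * b + b ^ 2 - 3 * (a + b) + (2 + p * (1 - p))) := by
    ring
  have := mul_pos (sub_pos.2 hab) hquot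
  simp only
  linarith

theorem R_bij_on_first_interval (p q : ℝ) (hp : 0 < p) (hp2 : p ≤ 1 / 2) (hq : q = 1 - p)
    (R : ℝ → ℝ) (hR : ∀ z, R z = z * (z ^ 2 - 3 * z + (2 + p * q)) / (p * q)) :
    StrictMonoOn R (Set.Icc 0 p) ∧ Set.BijOn R (Set.Icc 0 p) (Set.Icc 0 2) := by
  subst hq
  have hpq : 0 < p * (1 - p) := mul_pos hp (by linarith)
  have hRfun : R = fun z => z * (z ^ 2 - 3 * z + (2 + p * (1 - p))) / (p * (1 - p)) := funext hR
  have hmono : StrictMonoOn R (Icc 0 p) :=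
    hRfun ▸ (strictMono_div_right_of_pos hpq).comp_strictMonoOn (strictMonoOn_cubic hp2)
  have hcont : ContinuousOn R (Icc 0 p) := by
    rw [hRfun]
    fun_prop
  have hR0 : R 0 = 0 := by simp [hR]
  have hRp : R p = 2 := by
    rw [hR, div_eq_iff hpq.ne']
    ring
  refine ⟨hmono, ?_⟩
  simpa only [hR0, hRp] using hmono.bijOn_Icc hp.le hcont
end

section
/- Let π : ℤ₊ → (0,∞) be the invariant measure of the pq birth-and-death chain generated by Δ_p, determined by the reversibility relations π(0)·1 = π(1)·q and, for x ≥ 1, π(x)·p(x,x+1) = π(x+1)·p(x+1,x) with transition probabilities p(x,x+1) = p, p(x,x-1) = q if x·3^{-m(x)} ≡ 1 mod 3 and p(x,x+1) = q, p(x,x-1) = p if x·3^{-m(x)} ≡ 2 mod 3 (and p(0,1)=1). Then π(3x) = π(x) for all x ∈ ℤ₊ with x ≥ 1. -/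
/-!
`3x` and `x` have the same leading nonzero ternary digit, so the walk steps up from `3x` as it
does from `x`, and down from `3x + 3` as it does from `x + 1`. The remaining factors
`p(3x+1, 3x+2) p(3x+2, 3x+3) / (p(3x+1, 3x) p(3x+2, 3x+1)) = p q / (q p)` cancel, hence
`π(3x + 3) / π(3x) = π(x + 1) / π(x)`, and `π(3x) = π(x)` follows by induction from `x = 0`.
-/

/-- Probability of moving up (`x → x+1`) in the `pq` random walk. -/
def pqUp (p q : ℝ) : ℕ → ℝ
  | 0 => 1
  | (x + 1) =>
      if (x + 1) / 3 ^ (padicValNat 3 (x + 1)) % 3 = 1 then p else q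

/-- Probability of moving down (`x → x-1`) in the `pq` random walk (for `x ≥ 1`). -/
def pqDown (p q : ℝ) : ℕ → ℝ
  | 0 => 0
  | (x + 1) =>
      if (x + 1) / 3 ^ (padicValNat 3 (x + 1)) % 3 = 1 then q else p

/-- The invariant (symmetrizing) measure of the `pq` birth-and-death chain,
normalized by `π(0) = 1`, defined via the reversibility relations
`π(x) p(x,x+1) = π(x+1) p(x+1,x)`. -/
noncomputable def pqPi (p q : ℝ) : ℕ → ℝ
  | 0 => 1
  | (x + 1) => pqPi p q x * pqUp p q x / pqDown p q (x + 1)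

theorem Nat.prime_mul_div_pow_padicValNat (p n : ℕ) [hp : Fact p.Prime] :
    p * n / p ^ padicValNat p (p * n) = n / p ^ padicValNat p n := by
  simpa [Nat.factorization_def _ hp.out] using Nat.ordCompl_self_pow_mul n 1 hp.out

section PqWalk

variable (p q : ℝ)

lemma pqUp_of_ne_zero {n : ℕ} (hn : n ≠ 0) :
    pqUp p q n = if n / 3 ^ padicValNat 3 n % 3 = 1 then p else q := by
  obtain ⟨m, rfl⟩ := Nat.exists_eq_succ_of_ne_zero hn
  rfl

lemma pqDown_of_ne_zero {n : ℕ} (hn : n ≠ 0) :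
    pqDown p q n = if n / 3 ^ padicValNat 3 n % 3 = 1 then q else p := by
  obtain ⟨m, rfl⟩ := Nat.exists_eq_succ_of_ne_zero hn
  rfl

lemma pqPi_succ (n : ℕ) : pqPi p q (n + 1) = pqPi p q n * pqUp p q n / pqDown p q (n + 1) :=
  rfl

lemma pqUp_three_mul (n : ℕ) : pqUp p q (3 * n) = pqUp p q n := by
  rcases eq_or_ne n 0 with rfl | hn
  · rfl
  rw [pqUp_of_ne_zero p q hn, pqUp_of_ne_zero p q (by positivity),
    Nat.prime_mul_div_pow_padicValNat]

lemma pqDown_three_mul (n : ℕ) : pqDown p q (3 * n) = pqDown p q n := by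
  rcases eq_or_ne n 0 with rfl | hn
  · rfl
  rw [pqDown_of_ne_zero p q hn, pqDown_of_ne_zero p q (by positivity),
    Nat.prime_mul_div_pow_padicValNat]

lemma padicValNat_three_mul_add_one (x : ℕ) : padicValNat 3 (3 * x + 1) = 0 :=
  padicValNat.eq_zero_of_not_dvd (by omega)

lemma padicValNat_three_mul_add_two (x : ℕ) : padicValNat 3 (3 * x + 2) = 0 :=
  padicValNat.eq_zero_of_not_dvd (by omega)

lemma pqUp_three_mul_add_one (x : ℕ) : pqUp p q (3 * x + 1) = p := by
  simp [pqUp_of_ne_zero, padicValNat_three_mul_add_one]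

lemma pqDown_three_mul_add_one (x : ℕ) : pqDown p q (3 * x + 1) = q := by
  simp [pqDown_of_ne_zero, padicValNat_three_mul_add_one]

lemma pqUp_three_mul_add_two (x : ℕ) : pqUp p q (3 * x + 2) = q := by
  simp [pqUp_of_ne_zero, padicValNat_three_mul_add_two]

lemma pqDown_three_mul_add_two (x : ℕ) : pqDown p q (3 * x + 2) = p := by
  simp [pqDown_of_ne_zero, padicValNat_three_mul_add_two]

variable {p q}

lemma pqPi_three_mul_succ (hp : p ≠ 0) (hq : q ≠ 0) (x : ℕ) :
    pqPi p q (3 * (x + 1)) = pqPi p q (3 * x) * pqUp p q x / pqDown p q (x + 1) := by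
  rw [← pqUp_three_mul, ← pqDown_three_mul, show 3 * (x + 1) = 3 * x + 2 + 1 by ring, pqPi_succ,
    pqPi_succ, pqPi_succ, pqUp_three_mul_add_one, pqDown_three_mul_add_one,
    pqUp_three_mul_add_two, pqDown_three_mul_add_two]
  field_simp

lemma pqPi_three_mul (hp : p ≠ 0) (hq : q ≠ 0) (x : ℕ) : pqPi p q (3 * x) = pqPi p q x := by
  induction x with
  | zero => rfl
  | succ x ih => rw [pqPi_three_mul_succ hp hq, ih, pqPi_succ]

end PqWalk

theorem pqPi_self_similar (p q : ℝ) (hp : 0 < p) (hp1 : p < 1) (hq : q = 1 - p) :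
    ∀ x : ℕ, 1 ≤ x → pqPi p q (3 * x) = pqPi p q x :=
  fun x _ => pqPi_three_mul hp.ne' (by rw [hq]; linarith) x
end

section
/- For p ∈ (0,1), q = 1-p, p ≠ 1/2, and R(z) = z(z²-3z+(2+pq))/(pq): if z ∈ ℝ with z < 0 or z > 2, then the iterates R^{∘n}(z) tend to +∞ or -∞; in particular the filled Julia set of R restricted to ℝ is contained in [0,2]. -/
/-!
Writing `c = p q`, the map is `R z = z + z (z - 1) (z - 2) / c`. The cubic term is odd about `1`,
so `R (2 - z) = 2 - R z`, and a point `z < 0` escapes exactly when `2 - z > 2` does. To the right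
of `2` we have `R x - 2 = (x - 2) (1 + x (x - 1) / c) ≥ (1 + 2 / c) (x - 2)`, so the distance to `2`
grows at least geometrically.
-/

open Filter

theorem tendsto_iterate_atTop_of_expanding {α : Type*} [Field α] [LinearOrder α]
    [IsStrictOrderedRing α] [Archimedean α] {f : α → α} {a k : α} (hk : 1 < k)
    (hf : ∀ x, a < x → k * (x - a) ≤ f x - a) {x : α} (hx : a < x) :
    Tendsto (fun n => f^[n] x) atTop atTop := by
  have hgrowth : ∀ n : ℕ, k ^ n * (x - a) ≤ f^[n] x - a := by
    intro n
    induction n with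
    | zero => simp
    | succ n ih =>
      have hpos : 0 < k ^ n * (x - a) := by
        have := pow_pos (zero_lt_one.trans hk) n
        have := sub_pos.2 hx
        positivity
      rw [Function.iterate_succ_apply']
      calc k ^ (n + 1) * (x - a) = k * (k ^ n * (x - a)) := by ring
        _ ≤ k * (f^[n] x - a) := by gcongr
        _ ≤ f (f^[n] x) - a := hf _ (by linarith)
  have hpow : Tendsto (fun n : ℕ => a + k ^ n * (x - a)) atTop atTop :=
    tendsto_atTop_add_const_left _ a
      ((tendsto_pow_atTop_atTop_of_one_lt hk).atTop_mul_const (sub_pos.2 hx))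
  exact tendsto_atTop_mono (fun n => by linarith [hgrowth n]) hpow

section CubicMap

variable {c : ℝ} {R : ℝ → ℝ} (hR : ∀ z, R z = z * (z ^ 2 - 3 * z + (2 + c)) / c)
include hR

theorem semiconj_two_sub (hc : c ≠ 0) : Function.Semiconj (2 - ·) R R := by
  intro z
  simp only [hR]
  field_simp
  ring

theorem mul_sub_two_le_sub_two (hc : 0 < c) {x : ℝ} (hx : 2 < x) :
    (1 + 2 / c) * (x - 2) ≤ R x - 2 := by
  have hfactor : R x - 2 = (x - 2) * (1 + x * (x - 1) / c) := by
    rw [hR]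
    field_simp
    ring
  rw [hfactor, mul_comm]
  gcongr
  nlinarith

end CubicMap

theorem iterates_escape_outside_Icc_general (p q : ℝ) (hp : 0 < p) (hp1 : p < 1)
    (hq : q = 1 - p)
    (R : ℝ → ℝ) (hR : ∀ z, R z = z * (z ^ 2 - 3 * z + (2 + p * q)) / (p * q)) :
    ∀ z : ℝ, z < 0 ∨ 2 < z →
      Filter.Tendsto (fun n : ℕ => |R^[n] z|) Filter.atTop Filter.atTop := by
  have hc : 0 < p * q := by rw [hq]; nlinarith
  have hk : 1 < 1 + 2 / (p * q) := by have := div_pos two_pos hc; linarith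
  have escape : ∀ x, 2 < x → Tendsto (fun n => R^[n] x) atTop atTop := fun x hx =>
    tendsto_iterate_atTop_of_expanding hk (fun _ => mul_sub_two_le_sub_two hR hc) hx
  rintro z (hz | hz)
  · have hmirror : ∀ n, R^[n] z = 2 - R^[n] (2 - z) := fun n => by
      rw [← (semiconj_two_sub hR hc.ne').iterate_right n z, sub_sub_cancel]
    simp_rw [hmirror]
    exact tendsto_abs_atBot_atTop.comp
      (tendsto_atBot_add_const_left _ 2 (tendsto_neg_atTop_atBot.comp (escape _ (by linarith))))
  · exact tendsto_abs_atTop_atTop.comp (escape z hz)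

theorem iterates_escape_outside_Icc (p q : ℝ) (hp : 0 < p) (hp1 : p < 1)
    (hphalf : p ≠ 1 / 2) (hq : q = 1 - p)
    (R : ℝ → ℝ) (hR : ∀ z, R z = z * (z ^ 2 - 3 * z + (2 + p * q)) / (p * q)) :
    ∀ z : ℝ, z < 0 ∨ 2 < z →
      Filter.Tendsto (fun n : ℕ => |R^[n] z|) Filter.atTop Filter.atTop :=
  iterates_escape_outside_Icc_general p q hp hp1 hq R hR
end
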